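/- arXiv:1809.00606 — 2 statements merged into one kernel-verified Lean document; each statement's English description precedes it below -/
import Mathlib

section
/- Theorem 3.5: Let (U, Δ, 𝒟) be a covering decision information system with Δ = (𝒞₁, …, 𝒞ₘ), let 𝒞ₘ⁺ be a refinement of 𝒞ₘ and Δ⁺ = (𝒞₁, …, 𝒞ₘ₋₁, 𝒞ₘ⁺). Assume ⋃𝒜_{𝒞ₘ} ⊆ ⋃𝒜_{𝒞ₘ⁺} and POS_{∪Δ⁺}(𝒟) = POS_{∪Δ}(𝒟). Then 𝓡(U,Δ⁺,𝒟) = ◊𝓡(U,Δ,𝒟) ∪ ▲𝓡(U,Δ,𝒟), where ◊𝓡(U,Δ,𝒟) = {P ∈ 𝓡(U,Δ,𝒟) : m ∉ P} and ▲𝓡(U,Δ,𝒟) is the set of all P ⊆ {1,…,m} such that m ∈ P, P is minimal among m-containing sets intersecting r(x) for every x ∈ POS_{∪Δ}(𝒟) \ ⋃𝒜_{𝒞ₘ⁺}, and no member of 𝓡(U,Δ,𝒟) is a proper subset of P. -/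
open Set

/-- A covering of `U`: a family of nonempty subsets whose union is all of `U`. -/
def IsCovering {U : Type*} (𝒞 : Set (Set U)) : Prop :=
  (∀ C ∈ 𝒞, C.Nonempty) ∧ ⋃₀ 𝒞 = Set.univ

/-- A partition of `U`: a covering whose blocks are pairwise disjoint. -/
def IsPartitionC {U : Type*} (𝒟 : Set (Set U)) : Prop :=
  IsCovering 𝒟 ∧ ∀ D₁ ∈ 𝒟, ∀ D₂ ∈ 𝒟, D₁ ≠ D₂ → Disjoint D₁ D₂

/-- `𝒜_𝒞 = {C ∈ 𝒞 : ∃ D ∈ 𝒟, C ⊆ D}`: blocks of `𝒞` contained in some decision class. -/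
def goodBlocks {U : Type*} (𝒟 𝒞 : Set (Set U)) : Set (Set U) :=
  {C ∈ 𝒞 | ∃ D ∈ 𝒟, C ⊆ D}

/-- The related set `r(x)` of `x`: indices `i` such that some block of `𝒞ᵢ` contains `x`
and is contained in some decision class. -/
def relSet {U : Type*} {m : ℕ} (Δ : Fin m → Set (Set U)) (𝒟 : Set (Set U)) (x : U) :
    Set (Fin m) :=
  {i | ∃ C ∈ Δ i, x ∈ C ∧ ∃ D ∈ 𝒟, C ⊆ D}

/-- The positive region `POS_{∪Δ}(𝒟) = ⋃_{D ∈ 𝒟} ⋃ {K : K a block of some 𝒞ᵢ, K ⊆ D}`. -/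
def POS {U : Type*} {m : ℕ} (Δ : Fin m → Set (Set U)) (𝒟 : Set (Set U)) : Set U :=
  ⋃ D ∈ 𝒟, ⋃₀ {K | (∃ i, K ∈ Δ i) ∧ K ⊆ D}

/-- `𝒞'` refines `𝒞` (and `𝒞` coarsens `𝒞'`): every block of `𝒞'` is inside a block of `𝒞`. -/
def Refines {U : Type*} (𝒞' 𝒞 : Set (Set U)) : Prop :=
  ∀ C ∈ 𝒞', ∃ C₀ ∈ 𝒞, C ⊆ C₀

/-- `P` is a reduct of `(U, Δ, 𝒟)`: `P` meets `r(x)` for every `x` in the positive region,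
and no proper subset of `P` has this property. -/
def IsReduct {U : Type*} {m : ℕ} (Δ : Fin m → Set (Set U)) (𝒟 : Set (Set U))
    (P : Set (Fin m)) : Prop :=
  (∀ x ∈ POS Δ 𝒟, (P ∩ relSet Δ 𝒟 x).Nonempty) ∧
  ∀ Q : Set (Fin m), Q ⊂ P → ¬ (∀ x ∈ POS Δ 𝒟, (Q ∩ relSet Δ 𝒟 x).Nonempty)

/-!
Replacing `𝒞ₘ` by its refinement changes the related sets `r(x)` only at the index `m`, and
since `⋃𝒜_{𝒞ₘ} ⊆ ⋃𝒜_{𝒞ₘ⁺}` not at all for `x ∉ ⋃𝒜_{𝒞ₘ⁺}`. With the positive region unchanged,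
a set avoiding `m` therefore meets all related sets for `Δ⁺` iff it does so for `Δ`, while a set
containing `m` does so iff it meets `r(x)` for `x ∈ POS \ ⋃𝒜_{𝒞ₘ⁺}` (the other points are met
by `m` itself). Reducts are the minimal such sets. A set containing `m` that is minimal among
those containing `m` can only fail to be a reduct through a proper subset avoiding `m`, and such
a subset contains an old reduct.
-/

section SplitMinimal

variable {ι : Type*} {S S' T : Set ι → Prop} {a : ι}

theorem minimal_iff_of_agree_off_of_agree_on [Finite ι]
    (hoff : ∀ P, a ∉ P → (S' P ↔ S P)) (hon : ∀ P, a ∈ P → (S' P ↔ T P))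
    (hST : ∀ P, S P → T P) (P : Set ι) :
    Minimal S' P ↔ (Minimal S P ∧ a ∉ P) ∨
      (Minimal (fun Q ↦ a ∈ Q ∧ T Q) P ∧ ∀ Q, Minimal S Q → ¬ Q ⊂ P) := by
  have hS'_of_S : ∀ Q, S Q → S' Q := fun Q hQ ↦ by
    by_cases haQ : a ∈ Q
    · exact (hon Q haQ).2 (hST Q hQ)
    · exact (hoff Q haQ).2 hQ
  simp only [minimal_iff_forall_lt]
  by_cases haP : a ∈ P
  · simp only [haP, not_true_eq_false, and_false, true_and, false_or, hon P haP]
    constructor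
    · rintro ⟨hTP, hmin⟩
      exact ⟨⟨hTP, fun Q hQP ⟨haQ, hTQ⟩ ↦ hmin hQP ((hon Q haQ).2 hTQ)⟩,
        fun Q ⟨hSQ, _⟩ hQP ↦ hmin hQP (hS'_of_S Q hSQ)⟩
    · rintro ⟨⟨hTP, hmin⟩, hno⟩
      refine ⟨hTP, fun Q hQP hS'Q ↦ ?_⟩
      by_cases haQ : a ∈ Q
      · exact hmin hQP ⟨haQ, (hon Q haQ).1 hS'Q⟩
      · obtain ⟨R, hRQ, hR⟩ := exists_minimal_le_of_wellFoundedLT S Q ((hoff Q haQ).1 hS'Q)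
        exact hno R (minimal_iff_forall_lt.1 hR) (lt_of_le_of_lt hRQ hQP)
  · have hoff_lt : ∀ ⦃Q⦄, Q ⊂ P → (S' Q ↔ S Q) :=
      fun Q hQP ↦ hoff Q fun haQ ↦ haP (hQP.subset haQ)
    simp only [haP, not_false_eq_true, and_true, false_and, or_false, hoff P haP]
    exact and_congr_right' (forall₂_congr fun Q hQP ↦ not_congr (hoff_lt hQP))

end SplitMinimal

section Reducts

variable {U : Type*} {m : ℕ} (Δ : Fin m → Set (Set U)) (𝒟 : Set (Set U))

def MeetsRelSets (X : Set U) (P : Set (Fin m)) : Prop :=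
  ∀ x ∈ X, (P ∩ relSet Δ 𝒟 x).Nonempty

theorem isReduct_iff_minimal (P : Set (Fin m)) :
    IsReduct Δ 𝒟 P ↔ Minimal (MeetsRelSets Δ 𝒟 (POS Δ 𝒟)) P := by
  rw [minimal_iff_forall_lt]
  rfl

variable {Δ 𝒟}

theorem mem_relSet_iff {x : U} {i : Fin m} :
    i ∈ relSet Δ 𝒟 x ↔ x ∈ ⋃₀ goodBlocks 𝒟 (Δ i) := by
  simp only [relSet, goodBlocks, mem_ofPred_eq, mem_sUnion]
  tauto

theorem mem_relSet_update_of_ne {C : Set (Set U)} {x : U} {i j : Fin m} (hij : i ≠ j) :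
    i ∈ relSet (Function.update Δ j C) 𝒟 x ↔ i ∈ relSet Δ 𝒟 x := by
  rw [mem_relSet_iff, mem_relSet_iff, Function.update_of_ne hij]

theorem meetsRelSets_update_iff_of_notMem {C : Set (Set U)} {j : Fin m} {X : Set U}
    {P : Set (Fin m)} (hjP : j ∉ P) :
    MeetsRelSets (Function.update Δ j C) 𝒟 X P ↔ MeetsRelSets Δ 𝒟 X P := by
  have hinter : ∀ x, P ∩ relSet (Function.update Δ j C) 𝒟 x = P ∩ relSet Δ 𝒟 x :=
    fun x ↦ ext fun i ↦ and_congr_right fun hiP ↦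
      mem_relSet_update_of_ne fun hij ↦ hjP (hij ▸ hiP)
  simp only [MeetsRelSets, hinter]

theorem meetsRelSets_update_iff_of_mem {C : Set (Set U)} {j : Fin m} {X : Set U}
    {P : Set (Fin m)} (hjP : j ∈ P)
    (hmono : ⋃₀ goodBlocks 𝒟 (Δ j) ⊆ ⋃₀ goodBlocks 𝒟 C) :
    MeetsRelSets (Function.update Δ j C) 𝒟 X P ↔
      MeetsRelSets Δ 𝒟 (X \ ⋃₀ goodBlocks 𝒟 C) P := by
  have hrel : ∀ x ∉ ⋃₀ goodBlocks 𝒟 C, relSet (Function.update Δ j C) 𝒟 x = relSet Δ 𝒟 x := by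
    intro x hx
    ext i
    rcases eq_or_ne i j with rfl | hij
    · rw [mem_relSet_iff, mem_relSet_iff, Function.update_self]
      exact iff_of_false hx (mt (@hmono x) hx)
    · exact mem_relSet_update_of_ne hij
  refine ⟨fun h x ⟨hxX, hx⟩ ↦ hrel x hx ▸ h x hxX, fun h x hxX ↦ ?_⟩
  by_cases hx : x ∈ ⋃₀ goodBlocks 𝒟 C
  · exact ⟨j, hjP, mem_relSet_iff.2 (by rwa [Function.update_self])⟩
  · exact hrel x hx ▸ h x ⟨hxX, hx⟩

end Reducts

theorem stmt9_general {U : Type*} {m : ℕ}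
    (Δ : Fin (m + 1) → Set (Set U)) (𝒟 : Set (Set U))
    (Cp : Set (Set U))
    (Δp : Fin (m + 1) → Set (Set U))
    (hΔp : Δp = Function.update Δ (Fin.last m) Cp)
    (hmono : ⋃₀ goodBlocks 𝒟 (Δ (Fin.last m)) ⊆ ⋃₀ goodBlocks 𝒟 Cp)
    (hpos : POS Δp 𝒟 = POS Δ 𝒟) :
    {P : Set (Fin (m + 1)) | IsReduct Δp 𝒟 P} =
      {P : Set (Fin (m + 1)) | IsReduct Δ 𝒟 P ∧ Fin.last m ∉ P} ∪
      {P : Set (Fin (m + 1)) |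
        (Fin.last m ∈ P ∧
          ∀ x ∈ POS Δ 𝒟 \ ⋃₀ goodBlocks 𝒟 Cp, (P ∩ relSet Δ 𝒟 x).Nonempty) ∧
        (∀ Q : Set (Fin (m + 1)), Q ⊂ P →
          ¬ (Fin.last m ∈ Q ∧
              ∀ x ∈ POS Δ 𝒟 \ ⋃₀ goodBlocks 𝒟 Cp, (Q ∩ relSet Δ 𝒟 x).Nonempty)) ∧
        (∀ Q : Set (Fin (m + 1)), IsReduct Δ 𝒟 Q → ¬ Q ⊂ P)} := by
  ext P
  simp only [mem_ofPred_eq, mem_union, isReduct_iff_minimal, hpos]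
  subst hΔp
  refine (minimal_iff_of_agree_off_of_agree_on
    (fun _ h ↦ meetsRelSets_update_iff_of_notMem h)
    (fun _ h ↦ meetsRelSets_update_iff_of_mem h hmono)
    (fun _ h x hx ↦ h x hx.1) P).trans (or_congr_right ?_)
  rw [minimal_iff_forall_lt, and_assoc]
  rfl

/-- Theorem 3.5: assuming `⋃𝒜_{𝒞ₘ} ⊆ ⋃𝒜_{𝒞ₘ⁺}` and
`POS_{∪Δ⁺}(𝒟) = POS_{∪Δ}(𝒟)`, `𝓡(U,Δ⁺,𝒟) = ◊𝓡(U,Δ,𝒟) ∪ ▲𝓡(U,Δ,𝒟)`. -/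
theorem stmt9 {U : Type*} [Finite U] [Nonempty U] {m : ℕ}
    (Δ : Fin (m + 1) → Set (Set U)) (𝒟 : Set (Set U))
    (hΔ : ∀ i, IsCovering (Δ i)) (h𝒟 : IsPartitionC 𝒟)
    (Cp : Set (Set U)) (hCp : IsCovering Cp)
    (href : Refines Cp (Δ (Fin.last m)))
    (Δp : Fin (m + 1) → Set (Set U))
    (hΔp : Δp = Function.update Δ (Fin.last m) Cp)
    (hmono : ⋃₀ goodBlocks 𝒟 (Δ (Fin.last m)) ⊆ ⋃₀ goodBlocks 𝒟 Cp)
    (hpos : POS Δp 𝒟 = POS Δ 𝒟) :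
    {P : Set (Fin (m + 1)) | IsReduct Δp 𝒟 P} =
      {P : Set (Fin (m + 1)) | IsReduct Δ 𝒟 P ∧ Fin.last m ∉ P} ∪
      {P : Set (Fin (m + 1)) |
        (Fin.last m ∈ P ∧
          ∀ x ∈ POS Δ 𝒟 \ ⋃₀ goodBlocks 𝒟 Cp, (P ∩ relSet Δ 𝒟 x).Nonempty) ∧
        (∀ Q : Set (Fin (m + 1)), Q ⊂ P →
          ¬ (Fin.last m ∈ Q ∧
              ∀ x ∈ POS Δ 𝒟 \ ⋃₀ goodBlocks 𝒟 Cp, (Q ∩ relSet Δ 𝒟 x).Nonempty)) ∧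
        (∀ Q : Set (Fin (m + 1)), IsReduct Δ 𝒟 Q → ¬ Q ⊂ P)} :=
  stmt9_general Δ 𝒟 Cp Δp hΔp hmono hpos
end

section
/- Let (U, Δ, 𝒟) be a covering decision information system with Δ = (𝒞₁, …, 𝒞ₘ), let 𝒞ₘ⁻ be a coarsening of 𝒞ₘ and Δ⁻ = (𝒞₁, …, 𝒞ₘ₋₁, 𝒞ₘ⁻). Assume POS_{∪Δ⁻}(𝒟) = POS_{∪Δ}(𝒟). Then for every P ⊆ {1,…,m} with m ∉ P: P is a reduct of (U, Δ⁻, 𝒟) if and only if P is a reduct of (U, Δ, 𝒟). (The ◊𝓡 part of Theorem 4.4.) -/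
open Set

section

variable {U : Type*} {m : ℕ} {Δ Δ' : Fin m → Set (Set U)} {𝒟 : Set (Set U)} {P : Set (Fin m)}

theorem inter_relSet_eq_of_eqOn (h : EqOn Δ Δ' P) (x : U) :
    P ∩ relSet Δ 𝒟 x = P ∩ relSet Δ' 𝒟 x := by
  ext i
  exact and_congr_right fun hi => by simp only [relSet, mem_ofPred_eq, h hi]

theorem covers_pos_iff_of_eqOn (hpos : POS Δ 𝒟 = POS Δ' 𝒟) (h : EqOn Δ Δ' P) :
    (∀ x ∈ POS Δ 𝒟, (P ∩ relSet Δ 𝒟 x).Nonempty) ↔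
      ∀ x ∈ POS Δ' 𝒟, (P ∩ relSet Δ' 𝒟 x).Nonempty := by
  simp only [hpos, inter_relSet_eq_of_eqOn h]

theorem isReduct_congr_of_eqOn (hpos : POS Δ 𝒟 = POS Δ' 𝒟) (h : EqOn Δ Δ' P) :
    IsReduct Δ 𝒟 P ↔ IsReduct Δ' 𝒟 P := by
  refine and_congr (covers_pos_iff_of_eqOn hpos h) (forall₂_congr fun Q hQ => ?_)
  rw [covers_pos_iff_of_eqOn hpos (h.mono hQ.subset)]

end

theorem stmt14_general {U : Type*} {m : ℕ}
    (Δ : Fin (m + 1) → Set (Set U)) (𝒟 : Set (Set U))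
    (Cm : Set (Set U))
    (Δm : Fin (m + 1) → Set (Set U))
    (hΔm : Δm = Function.update Δ (Fin.last m) Cm)
    (hpos : POS Δm 𝒟 = POS Δ 𝒟) :
    ∀ P : Set (Fin (m + 1)), Fin.last m ∉ P →
      (IsReduct Δm 𝒟 P ↔ IsReduct Δ 𝒟 P) := by
  intro P hP
  refine isReduct_congr_of_eqOn hpos fun i hi => ?_
  rw [hΔm, Function.update_of_ne (ne_of_mem_of_not_mem hi hP)]

/-- the ◊𝓡 part of Theorem 4.4: assuming `POS_{∪Δ⁻}(𝒟) = POS_{∪Δ}(𝒟)`,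
for `P` with `m ∉ P`: `P` is a reduct of `(U, Δ⁻, 𝒟)` iff `P` is a reduct of `(U, Δ, 𝒟)`. -/
theorem stmt14 {U : Type*} [Finite U] [Nonempty U] {m : ℕ}
    (Δ : Fin (m + 1) → Set (Set U)) (𝒟 : Set (Set U))
    (hΔ : ∀ i, IsCovering (Δ i)) (h𝒟 : IsPartitionC 𝒟)
    (Cm : Set (Set U)) (hCm : IsCovering Cm)
    (hcoar : Refines (Δ (Fin.last m)) Cm)
    (Δm : Fin (m + 1) → Set (Set U))
    (hΔm : Δm = Function.update Δ (Fin.last m) Cm)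
    (hpos : POS Δm 𝒟 = POS Δ 𝒟) :
    ∀ P : Set (Fin (m + 1)), Fin.last m ∉ P →
      (IsReduct Δm 𝒟 P ↔ IsReduct Δ 𝒟 P) :=
  stmt14_general Δ 𝒟 Cm Δm hΔm hpos
end
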